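/- Let γ : [a,b] → ℂ be a path (a continuous function on a closed interval). If diam(γ([a,b])) ≤ 1/2, then (1/(2π)) · diam(γ([a,b])) ≤ len(γ) ≤ 2 · diam(γ([a,b])), where diam denotes Euclidean diameter. -/

import Mathlib

open Set MeasureTheory

noncomputable section

/-- The closed horizontal strip `S_j = {a + ib : a ∈ ℝ, b ∈ [j, j+1]} ⊆ ℂ`. -/
def hStrip (j : ℤ) : Set ℂ := {z : ℂ | (j : ℝ) ≤ z.im ∧ z.im ≤ (j : ℝ) + 1}

/-- The strip `S^{x,t,μ}_j = μ·e^{tπi}·(S_j + ix)`. -/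
def Strip (x t μ : ℝ) (j : ℤ) : Set ℂ :=
  (fun z : ℂ => (μ : ℂ) * Complex.exp ((t : ℂ) * (Real.pi : ℂ) * Complex.I) *
    (z + (x : ℂ) * Complex.I)) '' hStrip j

/-- The orthogonal projection of `ℂ` onto the line `{r·e^{(t+1/2)πi} : r ∈ ℝ}`,
composed with the natural isometric identification of this line with `ℝ`
(so that Euclidean diameters of subsets are preserved). -/
def projPerp (t : ℝ) (z : ℂ) : ℝ :=
  (z * Complex.exp (-(((t : ℂ) + 1 / 2) * (Real.pi : ℂ) * Complex.I))).re

/-- `‖A‖_t`, the (Euclidean) diameter of the orthogonal projection `proj⊥_t(A)`. -/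
def normT (t : ℝ) (A : Set ℂ) : ℝ := Metric.diam (projPerp t '' A)

/-- The collection of all connected components of the sets `γ⁻¹(S^{x,t,μ}_j)`, `j ∈ ℤ`. -/
def stripComponents {X : Type*} [TopologicalSpace X] (γ : X → ℂ) (x t μ : ℝ) : Set (Set X) :=
  {C | ∃ j : ℤ, ∃ p ∈ γ ⁻¹' Strip x t μ j, C = connectedComponentIn (γ ⁻¹' Strip x t μ j) p}

/-- The components whose image under `proj⊥_t ∘ γ` is non-degenerate. -/
def ndComponents {X : Type*} [TopologicalSpace X] (γ : X → ℂ) (x t μ : ℝ) : Set (Set X) :=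
  {C | C ∈ stripComponents γ x t μ ∧ (projPerp t '' (γ '' C)).Nontrivial}

/-- `L^{x,t,μ}(γ) = ∑ₙ ‖γ(C_n)‖_t / 2ⁿ`, where `⟨C_n⟩ₙ` enumerates the components of
the sets `γ⁻¹(S^{x,t,μ}_j)` (`j ∈ ℤ`) with non-degenerate projection, in non-increasing
order of `‖γ(C_n)‖_t`.  Since the weights `2⁻ⁿ` are strictly decreasing, this sum is equal
to the supremum, over all finite injective enumerations `e` of such components, of
`∑ₙ ‖γ(e n)‖_t / 2ⁿ`; we take this supremum as the formal definition. -/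
def Lfn {X : Type*} [TopologicalSpace X] (γ : X → ℂ) (x t μ : ℝ) : ℝ :=
  sSup {r : ℝ | ∃ (N : ℕ) (e : Fin N → Set X), Function.Injective e ∧
    (∀ n, e n ∈ ndComponents γ x t μ) ∧
    r = ∑ n : Fin N, normT t (γ '' e n) / (2 : ℝ) ^ (n : ℕ)}

/-- `len(γ) = ∫₀¹∫₀¹∫₀¹ L^{x,t,μ}(γ) dx dt dμ`. -/
def len {X : Type*} [TopologicalSpace X] (γ : X → ℂ) : ℝ :=
  ∫ μ in (0:ℝ)..1, ∫ t in (0:ℝ)..1, ∫ x in (0:ℝ)..1, Lfn γ x t μ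

/-- `len` of the restriction of `γ : ℝ → ℂ` to the closed interval `[a,b]`. -/
def lenOn (γ : ℝ → ℂ) (a b : ℝ) : ℝ := len (fun s : Icc a b => γ s)

/-!
Upper bound: `‖γ(C)‖_t ≤ diam γ([a,b])` for every component `C`, and the weights `2⁻ⁿ` sum to
less than `2`.

Lower bound: if the strip width `μ` is at least the diameter, the range of `proj⊥_t ∘ γ` meets at
most two consecutive strips, and in one of them a single component already has projection at
least half of that range; so `L^{x,t,μ}(γ) ≥ |proj⊥_t z - proj⊥_t w| / 2` for `μ > 1/2` and all
`z, w` on the path. As `|proj⊥_t ζ| = |ζ| |cos(πt + c)|`, the average of `|proj⊥_t (z - w)|` over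
`t ∈ [0,1]` is `2|z - w|/π`, and restricting to `μ ∈ (1/2, 1]` costs another factor `1/2`. For the integrals to be the genuine ones, `L` must be
measurable in `(x, t, μ)`: for `μ > 0` it is the supremum of countably many measurable functions,
indexed by certificates made of strip indices and rational parameter segments.
-/

open scoped Real

lemma projPerp_eq_im (t : ℝ) (z : ℂ) :
    projPerp t z = (z * Complex.exp (-(t * π * Complex.I))).im := by
  rw [projPerp, show -(((t : ℂ) + 1 / 2) * π * Complex.I)
      = -(t * π * Complex.I) + -π / 2 * Complex.I by ring, Complex.exp_add,
    Complex.exp_neg_pi_div_two_mul_I, ← mul_assoc]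
  simp

lemma projPerp_sub (t : ℝ) (z w : ℂ) : projPerp t (z - w) = projPerp t z - projPerp t w := by
  simp [projPerp, sub_mul]

lemma lipschitzWith_projPerp (t : ℝ) : LipschitzWith 1 (projPerp t) := by
  refine LipschitzWith.of_dist_le_mul fun z w => ?_
  rw [Real.dist_eq, ← projPerp_sub, projPerp, NNReal.coe_one, one_mul, Complex.dist_eq]
  refine (Complex.abs_re_le_norm _).trans ?_
  rw [norm_mul, show -(((t : ℂ) + 1 / 2) * π * Complex.I)
      = ((-((t + 1 / 2) * π) : ℝ) : ℂ) * Complex.I by push_cast; ring,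
    Complex.norm_exp_ofReal_mul_I, mul_one]

lemma dist_projPerp_le (t : ℝ) (z w : ℂ) : dist (projPerp t z) (projPerp t w) ≤ dist z w := by
  simpa using (lipschitzWith_projPerp t).dist_le_mul z w

lemma continuous_projPerp_apply (z : ℂ) : Continuous fun t => projPerp t z := by
  unfold projPerp; fun_prop

-- Unlike `Strip`, the band is cut out by inequalities continuous in `(x, t, μ)`.
def band (x t μ : ℝ) (j : ℤ) : Set ℂ := projPerp t ⁻¹' Icc (μ * (j + x)) (μ * (j + x) + μ)

lemma Strip_eq_band {x t μ : ℝ} (hμ : 0 < μ) (j : ℤ) : Strip x t μ j = band x t μ j := by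
  have hE : Complex.exp (t * π * Complex.I) * Complex.exp (-(t * π * Complex.I)) = 1 := by
    rw [← Complex.exp_add, add_neg_cancel, Complex.exp_zero]
  have hμ' : (μ : ℂ) ≠ 0 := by exact_mod_cast hμ.ne'
  rw [Strip, image_eq_preimage_of_inverse
    (g := fun z => z * Complex.exp (-(t * π * Complex.I)) / μ - x * Complex.I)]
  · ext z
    have him : (z * Complex.exp (-(t * π * Complex.I)) / μ - x * Complex.I).im
        = projPerp t z / μ - x := by
      rw [projPerp_eq_im]; simp
    simp only [hStrip, band, mem_preimage, mem_ofPred_eq, mem_Icc, him]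
    rw [le_sub_iff_add_le, sub_le_iff_le_add, le_div_iff₀ hμ, div_le_iff₀ hμ]
    constructor <;> rintro ⟨h1, h2⟩ <;> constructor <;> linarith
  · intro z
    simp only
    field_simp
    linear_combination (z + x * Complex.I) * hE
  · intro z
    simp only
    field_simp
    linear_combination z * hE

lemma projPerp_eq_of_mem_band_of_lt {x t μ : ℝ} (hμ : 0 ≤ μ) {j k : ℤ} (hjk : j < k) {z : ℂ}
    (hj : z ∈ band x t μ j) (hk : z ∈ band x t μ k) : projPerp t z = μ * (k + x) := by
  have : (j : ℝ) + 1 ≤ k := by exact_mod_cast hjk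
  simp only [band, mem_preimage, mem_Icc] at hj hk
  nlinarith

lemma integral_abs_cos (ψ : ℝ) : ∫ u in ψ..ψ + π, |Real.cos u| = 2 := by
  have hper : Function.Periodic (fun u => |Real.cos u|) π := fun u => by simp [Real.cos_add_pi]
  rw [hper.intervalIntegral_add_eq ψ (-(π / 2)), show -(π / 2) + π = π / 2 by ring,
    intervalIntegral.integral_congr (g := Real.cos) fun u hu => abs_of_nonneg
      (Real.cos_nonneg_of_mem_Icc (by rwa [uIcc_of_le (by linarith [Real.pi_pos])] at hu)),
    integral_cos]
  norm_num

lemma projPerp_eq_norm_mul_cos (t : ℝ) (z : ℂ) :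
    projPerp t z = ‖z‖ * Real.cos (π * t + (π / 2 - Complex.arg z)) := by
  conv_lhs => rw [← Complex.norm_mul_exp_arg_mul_I z]
  rw [projPerp, mul_assoc, ← Complex.exp_add, show (Complex.arg z : ℂ) * Complex.I +
      -(((t : ℂ) + 1 / 2) * π * Complex.I) = ((Complex.arg z - (t + 1 / 2) * π : ℝ) : ℂ) * Complex.I
      by push_cast; ring, Complex.re_ofReal_mul, Complex.exp_ofReal_mul_I_re, ← Real.cos_neg]
  ring_nf

lemma integral_dist_projPerp (z w : ℂ) :
    ∫ t in (0 : ℝ)..1, dist (projPerp t z) (projPerp t w) = 2 / π * dist z w := by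
  simp_rw [Real.dist_eq, ← projPerp_sub, projPerp_eq_norm_mul_cos, abs_mul, abs_norm]
  rw [intervalIntegral.integral_const_mul,
    intervalIntegral.integral_comp_mul_add (fun u => |Real.cos u|) Real.pi_pos.ne',
    mul_zero, zero_add, mul_one, add_comm π, integral_abs_cos, Complex.dist_eq, smul_eq_mul]
  ring

lemma sum_div_two_pow_le {N : ℕ} {f : Fin N → ℝ} {C : ℝ} (hC : 0 ≤ C) (hf : ∀ n, f n ≤ C) :
    ∑ n : Fin N, f n / 2 ^ (n : ℕ) ≤ 2 * C := by
  calc ∑ n : Fin N, f n / 2 ^ (n : ℕ) ≤ ∑ n : Fin N, C * (1 / 2) ^ (n : ℕ) := by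
        gcongr with n
        rw [one_div_pow, mul_one_div]
        gcongr
        exact hf n
    _ = C * ∑ n ∈ Finset.range N, (1 / 2 : ℝ) ^ n := by
        rw [← Finset.mul_sum, Fin.sum_univ_eq_sum_range (fun n => (1 / 2 : ℝ) ^ n)]
    _ ≤ C * 2 := by gcongr; exact sum_geometric_two_le N
    _ = 2 * C := mul_comm _ _

lemma exists_dist_gt_of_lt_diam {α : Type*} [PseudoMetricSpace α] {A : Set α} {r : ℝ}
    (hr₀ : 0 ≤ r) (hr : r < Metric.diam A) :
    ∃ y ∈ A, ∃ y' ∈ A, r < dist y y' := by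
  by_contra! h
  exact hr.not_ge (Metric.diam_le_of_forall_dist_le hr₀ h)

lemma exists_rat_mem_uIcc_abs_sub_lt {g : ℝ → ℝ} {u v : ℝ} (hg : ContinuousOn g (uIcc u v))
    (huv : u ≠ v) {η : ℝ} (hη : 0 < η) : ∃ q : ℚ, (q : ℝ) ∈ uIcc u v ∧ |g q - g u| < η := by
  obtain ⟨ε, hε, hεg⟩ := Metric.continuousWithinAt_iff.1 (hg u left_mem_uIcc) η hη
  have hu : u ∈ closure (Ioo (u ⊓ v) (u ⊔ v)) := by
    rw [closure_Ioo (inf_lt_sup.2 huv).ne]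
    exact ⟨inf_le_left, le_sup_left⟩
  obtain ⟨y, hy⟩ := mem_closure_iff.1 hu _ Metric.isOpen_ball (Metric.mem_ball_self hε)
  obtain ⟨q, hqε, hq⟩ :=
    Rat.denseRange_cast.exists_mem_open (Metric.isOpen_ball.inter isOpen_Ioo) ⟨y, hy⟩
  exact ⟨q, Ioo_subset_Icc_self hq, by simpa [Real.dist_eq] using hεg (Ioo_subset_Icc_self hq) hqε⟩

section Interval

variable {S : Set ℝ}

lemma isPreconnected_preimage_uIcc [S.OrdConnected] (u v : ℝ) :
    IsPreconnected ((↑) ⁻¹' uIcc u v : Set S) := by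
  rw [← Topology.IsInducing.subtypeVal.isPreconnected_image, Subtype.image_preimage_coe]
  exact (‹S.OrdConnected›.inter ordConnected_uIcc).isPreconnected

lemma mem_connectedComponentIn_of_preimage_uIcc_subset [S.OrdConnected] {P : Set S} {u v : S}
    (h : (↑) ⁻¹' uIcc (u : ℝ) v ⊆ P) : v ∈ connectedComponentIn P u :=
  (isPreconnected_preimage_uIcc u v).subset_connectedComponentIn left_mem_uIcc h right_mem_uIcc

lemma preimage_uIcc_subset_connectedComponentIn {P : Set S} {p u v : S}
    (hu : u ∈ connectedComponentIn P p) (hv : v ∈ connectedComponentIn P p) :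
    (↑) ⁻¹' uIcc (u : ℝ) v ⊆ connectedComponentIn P p := by
  intro s hs
  obtain ⟨s', hs', h⟩ := (isPreconnected_connectedComponentIn.image _
    continuous_subtype_val.continuousOn).ordConnected.uIcc_subset
    (mem_image_of_mem _ hu) (mem_image_of_mem _ hv) hs
  rwa [← Subtype.ext h]

end Interval

lemma exists_first_crossing {f : ℝ → ℝ} {u v c : ℝ} (hf : ContinuousOn f (uIcc u v))
    (hu : f u ≤ c) (hv : c ≤ f v) : ∃ w ∈ uIcc u v, f w = c ∧ ∀ s ∈ uIcc u w, f s ≤ c := by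
  have hZ : IsCompact (uIcc u v ∩ f ⁻¹' {c}) := isCompact_uIcc.of_isClosed_subset
    (hf.preimage_isClosed_of_isClosed isClosed_Icc isClosed_singleton) inter_subset_left
  obtain ⟨w, ⟨hw, hfw⟩, hmin⟩ := hZ.exists_isMinOn
    (intermediate_value_uIcc hf (mem_uIcc_of_le hu hv))
    (continuous_id.sub continuous_const).abs.continuousOn
  refine ⟨w, hw, hfw, fun s hs => not_lt.1 fun hlt => ?_⟩
  have hsub : uIcc u s ⊆ uIcc u v :=
    uIcc_subset_uIcc left_mem_uIcc (uIcc_subset_uIcc left_mem_uIcc hw hs)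
  obtain ⟨s', hs', hfs'⟩ := intermediate_value_uIcc (hf.mono hsub) (mem_uIcc_of_le hu hlt.le)
  -- a crossing `s'` at least as close to `u` as `s`, hence strictly closer than `w`
  have hws : |w - u| ≤ |s - u| := (hmin ⟨hsub hs', hfs'⟩).trans (abs_sub_left_of_mem_uIcc hs')
  have hsw : s ≠ w := by rintro rfl; exact hlt.ne' (mem_preimage.1 hfw)
  rcases mem_uIcc.1 hs with ⟨h₁, h₂⟩ | ⟨h₁, h₂⟩
  · rw [abs_of_nonneg (by linarith), abs_of_nonneg (by linarith)] at hws
    exact hsw (by linarith)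
  · rw [abs_of_nonpos (by linarith), abs_of_nonpos (by linarith)] at hws
    exact hsw (by linarith)

section Lfn

variable {X : Type*} {δ : X → ℂ} {x t μ : ℝ}

lemma normT_image_le_diam (hb : Bornology.IsBounded (range δ)) (C : Set X) :
    normT t (δ '' C) ≤ Metric.diam (range δ) :=
  calc normT t (δ '' C) ≤ Metric.diam (δ '' C) := by
        simpa [normT] using
          (lipschitzWith_projPerp t).diam_image_le _ (hb.subset (image_subset_range _ _))
    _ ≤ Metric.diam (range δ) := Metric.diam_mono (image_subset_range _ _) hb

lemma abs_sub_le_normT (hb : Bornology.IsBounded (range δ)) {C : Set X} {p q : X}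
    (hp : p ∈ C) (hq : q ∈ C) : |projPerp t (δ q) - projPerp t (δ p)| ≤ normT t (δ '' C) := by
  rw [← Real.dist_eq]
  exact Metric.dist_le_diam_of_mem
    ((lipschitzWith_projPerp t).isBounded_image (hb.subset (image_subset_range _ _)))
    ⟨_, mem_image_of_mem _ hq, rfl⟩ ⟨_, mem_image_of_mem _ hp, rfl⟩

lemma sum_normT_le_two_mul_diam (hb : Bornology.IsBounded (range δ)) {N : ℕ} (e : Fin N → Set X) :
    ∑ n : Fin N, normT t (δ '' e n) / 2 ^ (n : ℕ) ≤ 2 * Metric.diam (range δ) :=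
  sum_div_two_pow_le Metric.diam_nonneg fun n => normT_image_le_diam hb (e n)

variable [TopologicalSpace X]

lemma Lfn_nonneg : 0 ≤ Lfn δ x t μ :=
  Real.sSup_nonneg <| by
    rintro _ ⟨N, e, -, -, rfl⟩
    exact Finset.sum_nonneg fun n _ => div_nonneg Metric.diam_nonneg (by positivity)

lemma sum_normT_le_Lfn (hb : Bornology.IsBounded (range δ)) {N : ℕ} {e : Fin N → Set X}
    (he : Function.Injective e) (hnd : ∀ n, e n ∈ ndComponents δ x t μ) :
    ∑ n : Fin N, normT t (δ '' e n) / 2 ^ (n : ℕ) ≤ Lfn δ x t μ :=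
  le_csSup ⟨_, by rintro _ ⟨N, e, -, -, rfl⟩; exact sum_normT_le_two_mul_diam hb e⟩
    ⟨N, e, he, hnd, rfl⟩

lemma abs_sub_le_Lfn_of_isPreconnected (hb : Bornology.IsBounded (range δ)) {S : Set X}
    (hS : IsPreconnected S) {j : ℤ} (hSj : S ⊆ δ ⁻¹' Strip x t μ j) {p q : X}
    (hp : p ∈ S) (hq : q ∈ S) : |projPerp t (δ q) - projPerp t (δ p)| ≤ Lfn δ x t μ := by
  rcases eq_or_ne (projPerp t (δ q)) (projPerp t (δ p)) with h | h
  · rw [h, sub_self, abs_zero]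
    exact Lfn_nonneg
  set C := connectedComponentIn (δ ⁻¹' Strip x t μ j) p
  have hSC : S ⊆ C := hS.subset_connectedComponentIn hp hSj
  have hC : C ∈ ndComponents δ x t μ :=
    ⟨⟨j, p, hSj hp, rfl⟩, _, mem_image_of_mem _ (mem_image_of_mem _ (hSC hq)),
      _, mem_image_of_mem _ (mem_image_of_mem _ (hSC hp)), h⟩
  calc |projPerp t (δ q) - projPerp t (δ p)| ≤ normT t (δ '' C) :=
        abs_sub_le_normT hb (hSC hp) (hSC hq)
    _ ≤ Lfn δ x t μ := by
        simpa using sum_normT_le_Lfn hb (e := fun _ : Fin 1 => C)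
          (fun _ _ _ => Subsingleton.elim _ _) fun _ => hC

end Lfn

section Path

variable {a b : ℝ} {γ : ℝ → ℂ} {x t μ : ℝ}

lemma isBounded_range_domRestrict (hγ : ContinuousOn γ (Icc a b)) :
    Bornology.IsBounded (range ((Icc a b).domRestrict γ)) := by
  rw [range_domRestrict]
  exact (isCompact_Icc.image_of_continuousOn hγ).isBounded

def SegInBand (γ : ℝ → ℂ) (x t μ : ℝ) (j : ℤ) (u v : ℝ) : Prop :=
  ∀ s ∈ uIcc u v, γ s ∈ band x t μ j

lemma SegInBand.preimage_subset (hμ : 0 < μ) {j : ℤ} {u v : ℝ} (h : SegInBand γ x t μ j u v) :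
    ((↑) ⁻¹' uIcc u v : Set (Icc a b)) ⊆ (Icc a b).domRestrict γ ⁻¹' Strip x t μ j :=
  fun s hs => by
    rw [mem_preimage, Strip_eq_band hμ]
    exact h s hs

lemma mem_band_of_mem_connectedComponentIn (hμ : 0 < μ) {j : ℤ} {s s₀ : Icc a b}
    (hs : s ∈ connectedComponentIn ((Icc a b).domRestrict γ ⁻¹' Strip x t μ j) s₀) :
    γ s ∈ band x t μ j := by
  have := connectedComponentIn_subset _ _ hs
  rwa [mem_preimage, Strip_eq_band hμ] at this

lemma abs_sub_le_Lfn_of_segInBand (hγ : ContinuousOn γ (Icc a b)) (hμ : 0 < μ) {j : ℤ}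
    {u v : ℝ} (hu : u ∈ Icc a b) (hv : v ∈ Icc a b) (h : SegInBand γ x t μ j u v) :
    |projPerp t (γ v) - projPerp t (γ u)| ≤ Lfn ((Icc a b).domRestrict γ) x t μ :=
  abs_sub_le_Lfn_of_isPreconnected (isBounded_range_domRestrict hγ)
    (isPreconnected_preimage_uIcc u v) (h.preimage_subset hμ) (p := ⟨u, hu⟩) (q := ⟨v, hv⟩)
    left_mem_uIcc right_mem_uIcc

lemma sub_le_two_mul_Lfn (hγ : ContinuousOn γ (Icc a b)) (hμ : 0 < μ) {u v : ℝ}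
    (hu : u ∈ Icc a b) (hv : v ∈ Icc a b)
    (hmin : ∀ s ∈ Icc a b, projPerp t (γ u) ≤ projPerp t (γ s))
    (hmax : ∀ s ∈ Icc a b, projPerp t (γ s) ≤ projPerp t (γ v))
    (hosc : projPerp t (γ v) - projPerp t (γ u) ≤ μ) :
    projPerp t (γ v) - projPerp t (γ u) ≤ 2 * Lfn ((Icc a b).domRestrict γ) x t μ := by
  set g := fun s => projPerp t (γ s)
  have hg : ContinuousOn g (Icc a b) := (lipschitzWith_projPerp t).continuous.comp_continuousOn hγ
  have hseg : uIcc u v ⊆ Icc a b := uIcc_subset_Icc hu hv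
  obtain ⟨k, hk₁, hk₂⟩ : ∃ k : ℤ, μ * (k + x) ≤ g u ∧ g u < μ * (k + x) + μ := by
    obtain ⟨k, hk, -⟩ := existsUnique_zsmul_near_of_pos hμ (g u - μ * x)
    refine ⟨k, ?_, ?_⟩ <;> simp only [zsmul_eq_mul, Int.cast_add, Int.cast_one] at hk <;>
      nlinarith [hk.1, hk.2]
  set c := μ * (k + x) + μ
  have hL := Lfn_nonneg (δ := (Icc a b).domRestrict γ) (x := x) (t := t) (μ := μ)
  by_cases hvc : g v ≤ c
  · have := abs_sub_le_Lfn_of_segInBand hγ hμ (j := k) hu hv fun s hs =>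
      ⟨hk₁.trans (hmin s (hseg hs)), (hmax s (hseg hs)).trans hvc⟩
    linarith [le_abs_self (g v - g u)]
  -- otherwise `γ` leaves the band `k` upwards: the first and the last crossing of the level `c`
  -- split `[u, v]` into a segment in band `k` and a segment in band `k + 1`
  push Not at hvc
  obtain ⟨w₁, hw₁, hgw₁, hbelow⟩ := exists_first_crossing (hg.mono hseg) hk₂.le hvc.le
  obtain ⟨w₂, hw₂, hgw₂, habove⟩ := exists_first_crossing (f := fun s => -g s) (c := -c)
    (hg.neg.mono (uIcc_comm u v ▸ hseg)) (neg_le_neg hvc.le) (neg_le_neg hk₂.le)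
  have h₁ := abs_sub_le_Lfn_of_segInBand hγ hμ (x := x) (j := k) hu
    (hseg hw₁) fun s hs => ⟨hk₁.trans (hmin s (hseg (uIcc_subset_uIcc left_mem_uIcc hw₁ hs))),
      hbelow s hs⟩
  have h₂ := abs_sub_le_Lfn_of_segInBand hγ hμ (x := x) (j := k + 1)
    (hseg (uIcc_comm u v ▸ hw₂)) hv fun s hs => by
      have hs' : s ∈ uIcc v w₂ := uIcc_comm w₂ v ▸ hs
      have := hmax s (hseg (uIcc_comm v u ▸ uIcc_subset_uIcc left_mem_uIcc hw₂ hs'))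
      refine ⟨?_, ?_⟩ <;> push_cast
      · linarith [habove s hs']
      · linarith
  simp only [g] at hgw₁ hgw₂
  rw [hgw₁, abs_of_nonneg (by linarith)] at h₁
  rw [show projPerp t (γ w₂) = c by linarith, abs_of_nonneg (by linarith)] at h₂
  linarith

lemma dist_projPerp_le_two_mul_Lfn (hγ : ContinuousOn γ (Icc a b)) (hμ : 0 < μ)
    (hdμ : Metric.diam (γ '' Icc a b) ≤ μ) {z w : ℂ} (hz : z ∈ γ '' Icc a b)
    (hw : w ∈ γ '' Icc a b) :
    dist (projPerp t z) (projPerp t w) ≤ 2 * Lfn ((Icc a b).domRestrict γ) x t μ := by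
  have hg : ContinuousOn (fun s => projPerp t (γ s)) (Icc a b) :=
    (lipschitzWith_projPerp t).continuous.comp_continuousOn hγ
  obtain ⟨u, hu, hmin⟩ := isCompact_Icc.exists_isMinOn (hz.imp fun _ h => h.1) hg
  obtain ⟨v, hv, hmax⟩ := isCompact_Icc.exists_isMaxOn (hz.imp fun _ h => h.1) hg
  have hbd := (isCompact_Icc.image_of_continuousOn hγ).isBounded
  have hosc : projPerp t (γ v) - projPerp t (γ u) ≤ μ :=
    calc projPerp t (γ v) - projPerp t (γ u) ≤ dist (γ v) (γ u) :=
          (le_abs_self _).trans ((Real.dist_eq _ _).symm.trans_le (dist_projPerp_le t _ _))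
      _ ≤ μ := (Metric.dist_le_diam_of_mem hbd (mem_image_of_mem _ hv)
          (mem_image_of_mem _ hu)).trans hdμ
  obtain ⟨s, hs, rfl⟩ := hz
  obtain ⟨s', hs', rfl⟩ := hw
  have := sub_le_two_mul_Lfn hγ hμ (x := x) hu hv hmin hmax hosc
  rw [Real.dist_eq, abs_sub_le_iff]
  have h₁ : projPerp t (γ u) ≤ projPerp t (γ s) := hmin hs
  have h₂ : projPerp t (γ u) ≤ projPerp t (γ s') := hmin hs'
  have h₃ : projPerp t (γ s) ≤ projPerp t (γ v) := hmax hs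
  have h₄ : projPerp t (γ s') ≤ projPerp t (γ v) := hmax hs'
  constructor <;> linarith

end Path

section Certificate

variable {γ : ℝ → ℂ} {a b : ℝ} {x t μ : ℝ}

variable (γ a b) in
/-- The `n`-th entry stands for the component of `p n` in `γ⁻¹(S_{j n})`, which contains the
segment from `p n` to `q n`; the last clause makes these components pairwise distinct. -/
def IsCert (N : ℕ) (j : Fin N → ℤ) (p q : Fin N → ℚ) (x t μ : ℝ) : Prop :=
  ∀ n, ((p n : ℝ) ∈ Icc a b ∧ (q n : ℝ) ∈ Icc a b) ∧ SegInBand γ x t μ (j n) (p n) (q n) ∧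
    projPerp t (γ (p n)) ≠ projPerp t (γ (q n)) ∧
    ∀ m, j m = j n → m ≠ n → ¬ SegInBand γ x t μ (j n) (p n) (p m)

variable (γ) in
def certValue (N : ℕ) (p q : Fin N → ℚ) (t : ℝ) : ℝ :=
  ∑ n, |projPerp t (γ (q n)) - projPerp t (γ (p n))| / 2 ^ (n : ℕ)

abbrev Cert : Type := Σ N : ℕ, (Fin N → ℤ) × (Fin N → ℚ) × (Fin N → ℚ)

variable (γ a b) in
def certTerm (c : Cert) (w : ℝ × ℝ × ℝ) : ℝ :=
  {w : ℝ × ℝ × ℝ | IsCert γ a b c.1 c.2.1 c.2.2.1 c.2.2.2 w.1 w.2.1 w.2.2}.indicator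
    (fun w => certValue γ c.1 c.2.2.1 c.2.2.2 w.2.1) w

variable (γ a b) in
/-- For `μ > 0`, `L^{x,t,μ}(γ)` written as a supremum over the countably many certificates,
which makes it measurable in `(x, t, μ)`. -/
def certLfn (w : ℝ × ℝ × ℝ) : ℝ := ⨆ c, certTerm γ a b c w

lemma isClosed_setOf_segInBand (j : ℤ) (u v : ℝ) :
    IsClosed {w : ℝ × ℝ × ℝ | SegInBand γ w.1 w.2.1 w.2.2 j u v} := by
  have : {w : ℝ × ℝ × ℝ | SegInBand γ w.1 w.2.1 w.2.2 j u v} = ⋂ s ∈ uIcc u v, {w : ℝ × ℝ × ℝ |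
      projPerp w.2.1 (γ s) ∈ Icc (w.2.2 * (j + w.1)) (w.2.2 * (j + w.1) + w.2.2)} := by
    ext; simp [SegInBand, band]
  rw [this]
  refine isClosed_biInter fun s _ => ?_
  have h : Continuous fun w : ℝ × ℝ × ℝ => projPerp w.2.1 (γ s) :=
    (continuous_projPerp_apply (γ s)).comp (continuous_fst.comp continuous_snd)
  exact (isClosed_le (by fun_prop) h).inter (isClosed_le h (by fun_prop))

lemma measurable_isCert (N : ℕ) (j : Fin N → ℤ) (p q : Fin N → ℚ) :
    Measurable fun w : ℝ × ℝ × ℝ => IsCert γ a b N j p q w.1 w.2.1 w.2.2 := by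
  have hseg : ∀ k u v, Measurable fun w : ℝ × ℝ × ℝ => SegInBand γ w.1 w.2.1 w.2.2 k u v :=
    fun k u v => measurableSet_setOfPred.1 (isClosed_setOf_segInBand k u v).measurableSet
  have hproj : ∀ z, Measurable fun w : ℝ × ℝ × ℝ => projPerp w.2.1 z := fun z =>
    ((continuous_projPerp_apply z).comp (continuous_fst.comp continuous_snd)).measurable
  refine Measurable.forall fun n => measurable_const.and ((hseg _ _ _).and
    ((measurableSet_setOfPred.1 (measurableSet_eq_fun (hproj _) (hproj _))).not.and
      (Measurable.forall fun m => measurable_const.imp (measurable_const.imp (hseg _ _ _).not))))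

lemma continuous_certValue (N : ℕ) (p q : Fin N → ℚ) : Continuous (certValue γ N p q) :=
  continuous_finsetSum _ fun _ _ =>
    ((continuous_projPerp_apply _).sub (continuous_projPerp_apply _)).abs.div_const _

lemma measurable_certLfn : Measurable (certLfn γ a b) :=
  Measurable.iSup fun c => show Measurable (certTerm γ a b c) from
    ((continuous_certValue c.1 c.2.2.1 c.2.2.2).measurable.comp
      (measurable_fst.comp measurable_snd)).indicator
      (measurableSet_setOfPred.2 (measurable_isCert c.1 c.2.1 c.2.2.1 c.2.2.2))

lemma certValue_le (hγ : ContinuousOn γ (Icc a b)) {N : ℕ} {p q : Fin N → ℚ}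
    (hpq : ∀ n, (p n : ℝ) ∈ Icc a b ∧ (q n : ℝ) ∈ Icc a b) (t : ℝ) :
    certValue γ N p q t ≤ 2 * Metric.diam (γ '' Icc a b) :=
  sum_div_two_pow_le Metric.diam_nonneg fun n =>
    ((Real.dist_eq _ _).symm.trans_le (dist_projPerp_le t _ _)).trans
      (Metric.dist_le_diam_of_mem (isCompact_Icc.image_of_continuousOn hγ).isBounded
        (mem_image_of_mem _ (hpq n).2) (mem_image_of_mem _ (hpq n).1))

lemma certTerm_le (hγ : ContinuousOn γ (Icc a b)) (c : Cert) (w : ℝ × ℝ × ℝ) :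
    certTerm γ a b c w ≤ 2 * Metric.diam (γ '' Icc a b) :=
  indicator_apply_le' (fun hc => certValue_le hγ (fun n => (hc n).1) _) fun _ => by positivity

lemma certLfn_nonneg (w : ℝ × ℝ × ℝ) : 0 ≤ certLfn γ a b w :=
  Real.iSup_nonneg fun _ =>
    indicator_nonneg (fun _ _ => Finset.sum_nonneg fun _ _ => by positivity) _

lemma certLfn_le (hγ : ContinuousOn γ (Icc a b)) (w : ℝ × ℝ × ℝ) :
    certLfn γ a b w ≤ 2 * Metric.diam (γ '' Icc a b) :=
  Real.iSup_le (certTerm_le hγ · w) (by positivity)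

lemma certValue_le_certLfn (hγ : ContinuousOn γ (Icc a b)) {N : ℕ} {j : Fin N → ℤ}
    {p q : Fin N → ℚ} (hc : IsCert γ a b N j p q x t μ) :
    certValue γ N p q t ≤ certLfn γ a b (x, t, μ) := by
  have hterm : certTerm γ a b ⟨N, j, p, q⟩ (x, t, μ) = certValue γ N p q t :=
    indicator_of_mem
      (show (x, t, μ) ∈ {w : ℝ × ℝ × ℝ | IsCert γ a b N j p q w.1 w.2.1 w.2.2} from hc) _
  exact hterm.symm.trans_le
    (le_ciSup ⟨_, forall_mem_range.2 (certTerm_le hγ · (x, t, μ))⟩ ⟨N, j, p, q⟩)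

lemma certValue_le_Lfn (hγ : ContinuousOn γ (Icc a b)) (hμ : 0 < μ) {N : ℕ} {j : Fin N → ℤ}
    {p q : Fin N → ℚ} (hc : IsCert γ a b N j p q x t μ) :
    certValue γ N p q t ≤ Lfn ((Icc a b).domRestrict γ) x t μ := by
  set δ := (Icc a b).domRestrict γ
  let p' n : Icc a b := ⟨p n, (hc n).1.1⟩
  let e n := connectedComponentIn (δ ⁻¹' Strip x t μ (j n)) (p' n)
  have hseg := fun n => (hc n).2.1.preimage_subset (a := a) (b := b) hμ
  have hp : ∀ n, p' n ∈ e n := fun n => mem_connectedComponentIn (hseg n left_mem_uIcc)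
  have hq : ∀ n, (⟨q n, (hc n).1.2⟩ : Icc a b) ∈ e n := fun n =>
    mem_connectedComponentIn_of_preimage_uIcc_subset (hseg n)
  have hnd : ∀ n, e n ∈ ndComponents δ x t μ := fun n =>
    ⟨⟨j n, p' n, hseg n left_mem_uIcc, rfl⟩, _, mem_image_of_mem _ (mem_image_of_mem _ (hp n)),
      _, mem_image_of_mem _ (mem_image_of_mem _ (hq n)), (hc n).2.2.1⟩
  have hband {k : ℤ} {s s₀ : Icc a b} (hs : s ∈ connectedComponentIn (δ ⁻¹' Strip x t μ k) s₀) :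
      γ s ∈ band x t μ k :=
    mem_band_of_mem_connectedComponentIn hμ hs
  have hinj : Function.Injective e := by
    intro n m hnm
    by_contra hne
    rcases eq_or_ne (j m) (j n) with hj | hj
    · have hpm : p' m ∈ e n := hnm ▸ hp m
      exact (hc n).2.2.2 m hj (Ne.symm hne) fun s hs => hband
        (preimage_uIcc_subset_connectedComponentIn (hp n) hpm
          (a := ⟨s, uIcc_subset_Icc (hc n).1.1 (hc m).1.1 hs⟩) hs)
    -- otherwise `e n = e m` lies in two different strips, so `proj⊥_t ∘ γ` is constant on it
    · have h₁ : γ (p n) ∈ band x t μ (j n) ∧ γ (p n) ∈ band x t μ (j m) :=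
        ⟨hband (hp n), hband (hnm ▸ hp n)⟩
      have h₂ : γ (q n) ∈ band x t μ (j n) ∧ γ (q n) ∈ band x t μ (j m) :=
        ⟨hband (hq n), hband (hnm ▸ hq n)⟩
      apply (hc n).2.2.1
      rcases hj.lt_or_gt with hlt | hlt
      · rw [projPerp_eq_of_mem_band_of_lt hμ.le hlt h₁.2 h₁.1,
          projPerp_eq_of_mem_band_of_lt hμ.le hlt h₂.2 h₂.1]
      · rw [projPerp_eq_of_mem_band_of_lt hμ.le hlt h₁.1 h₁.2,
          projPerp_eq_of_mem_band_of_lt hμ.le hlt h₂.1 h₂.2]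
  calc certValue γ N p q t ≤ ∑ n, normT t (δ '' e n) / 2 ^ (n : ℕ) := by
        unfold certValue
        gcongr with n
        exact abs_sub_le_normT (isBounded_range_domRestrict hγ) (hp n) (hq n)
    _ ≤ Lfn δ x t μ := sum_normT_le_Lfn (isBounded_range_domRestrict hγ) hinj hnd

lemma exists_certEntry (hγ : ContinuousOn γ (Icc a b)) (hμ : 0 < μ) {C : Set (Icc a b)}
    (hC : C ∈ ndComponents ((Icc a b).domRestrict γ) x t μ) {ε : ℝ} (hε : 0 < ε) :
    ∃ (j : ℤ) (p q : ℚ) (hp : (p : ℝ) ∈ Icc a b), (q : ℝ) ∈ Icc a b ∧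
      C = connectedComponentIn ((Icc a b).domRestrict γ ⁻¹' Strip x t μ j) ⟨p, hp⟩ ∧
      SegInBand γ x t μ j p q ∧ projPerp t (γ p) ≠ projPerp t (γ q) ∧
      normT t ((Icc a b).domRestrict γ '' C) - ε ≤ |projPerp t (γ q) - projPerp t (γ p)| := by
  obtain ⟨⟨j, s₀, -, rfl⟩, y, hy, y', hy', hyy'⟩ := hC
  set δ := (Icc a b).domRestrict γ
  set C := connectedComponentIn (δ ⁻¹' Strip x t μ j) s₀
  set g := fun s => projPerp t (γ s)
  have hg : ContinuousOn g (Icc a b) := (lipschitzWith_projPerp t).continuous.comp_continuousOn hγ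
  have hpos : 0 < normT t (δ '' C) := (dist_pos.2 hyy').trans_le
    (Metric.dist_le_diam_of_mem ((lipschitzWith_projPerp t).isBounded_image
      ((isBounded_range_domRestrict hγ).subset (image_subset_range _ _))) hy hy')
  obtain ⟨_, ⟨_, ⟨s₂, hs₂, rfl⟩, rfl⟩, _, ⟨_, ⟨s₁, hs₁, rfl⟩, rfl⟩, hgap⟩ :=
    exists_dist_gt_of_lt_diam (le_max_right _ 0)
      (max_lt (by linarith) hpos : max (normT t (δ '' C) - ε / 2) 0 < normT t (δ '' C))
  rw [Real.dist_eq, max_lt_iff] at hgap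
  change normT t (δ '' C) - ε / 2 < |g s₂ - g s₁| ∧ 0 < |g s₂ - g s₁| at hgap
  have hs₁₂ : (s₁ : ℝ) ≠ s₂ := fun h => by simp [g, h] at hgap
  have hI : uIcc (s₁ : ℝ) s₂ ⊆ Icc a b := uIcc_subset_Icc s₁.2 s₂.2
  set η := min (ε / 4) (|g s₂ - g s₁| / 3)
  have hη : 0 < η := lt_min (by linarith) (by linarith)
  obtain ⟨p, hpI, hpη⟩ := exists_rat_mem_uIcc_abs_sub_lt (hg.mono hI) hs₁₂ hη
  obtain ⟨q, hqI, hqη⟩ := exists_rat_mem_uIcc_abs_sub_lt (hg.mono (uIcc_comm (s₁ : ℝ) s₂ ▸ hI))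
    hs₁₂.symm hη
  rw [uIcc_comm] at hqI
  have hmem : ∀ s (hs : s ∈ uIcc (s₁ : ℝ) s₂), (⟨s, hI hs⟩ : Icc a b) ∈ C := fun s hs =>
    preimage_uIcc_subset_connectedComponentIn hs₁ hs₂ hs
  have hgpq : |g s₂ - g s₁| - 2 * η < |g q - g p| := by
    have h₁ := abs_sub_abs_le_abs_sub (g s₂ - g s₁) (g q - g p)
    have h₂ : |g s₂ - g s₁ - (g q - g p)| ≤ |g q - g s₂| + |g p - g s₁| := by
      rw [show g s₂ - g s₁ - (g q - g p) = -(g q - g s₂) + (g p - g s₁) by ring,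
        ← abs_neg (g q - g s₂)]
      exact abs_add_le _ _
    linarith
  refine ⟨j, p, q, hI hpI, hI hqI, connectedComponentIn_eq (hmem _ hpI), fun s hs => ?_, ?_, ?_⟩
  · exact mem_band_of_mem_connectedComponentIn hμ (hmem s (uIcc_subset_uIcc hpI hqI hs))
  · intro h
    have : |g q - g p| = 0 := by simp [g, h]
    linarith [min_le_right (ε / 4) (|g s₂ - g s₁| / 3)]
  · linarith [min_le_left (ε / 4) (|g s₂ - g s₁| / 3)]

lemma exists_isCert (hγ : ContinuousOn γ (Icc a b)) (hμ : 0 < μ) {N : ℕ}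
    {e : Fin N → Set (Icc a b)} (he : Function.Injective e)
    (hnd : ∀ n, e n ∈ ndComponents ((Icc a b).domRestrict γ) x t μ)
    {ε : ℝ} (hε : 0 < ε) : ∃ (j : Fin N → ℤ) (p q : Fin N → ℚ), IsCert γ a b N j p q x t μ ∧
      ∑ n, normT t ((Icc a b).domRestrict γ '' e n) / 2 ^ (n : ℕ) - ε ≤ certValue γ N p q t := by
  choose j p q hp hq hep hseg hne hval using fun n => exists_certEntry hγ hμ (hnd n) (half_pos hε)
  refine ⟨j, p, q, fun n => ⟨⟨hp n, hq n⟩, hseg n, hne n, fun m hjm hmn hsegm => hmn (he ?_)⟩, ?_⟩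
  · rw [hep m, hep n, hjm, connectedComponentIn_eq (mem_connectedComponentIn_of_preimage_uIcc_subset
      (u := ⟨p n, hp n⟩) (v := ⟨p m, hp m⟩) (hsegm.preimage_subset hμ))]
  · have := sum_div_two_pow_le (half_pos hε).le fun n => (sub_le_comm.1 (hval n))
    simp only [sub_div, Finset.sum_sub_distrib] at this
    unfold certValue
    linarith

lemma Lfn_eq_certLfn (hγ : ContinuousOn γ (Icc a b)) (hμ : 0 < μ) :
    Lfn ((Icc a b).domRestrict γ) x t μ = certLfn γ a b (x, t, μ) := by
  refine le_antisymm (Real.sSup_le ?_ (certLfn_nonneg _)) (ciSup_le fun c =>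
    indicator_apply_le' (fun hc => certValue_le_Lfn hγ hμ hc) fun _ => Lfn_nonneg)
  rintro _ ⟨N, e, he, hnd, rfl⟩
  refine le_of_forall_pos_le_add fun ε hε => ?_
  obtain ⟨j, p, q, hc, hval⟩ := exists_isCert hγ hμ he hnd hε
  linarith [certValue_le_certLfn hγ hc]

end Certificate

def cubeIntegral (F : ℝ × ℝ × ℝ → ℝ) : ℝ :=
  ∫ μ in (0 : ℝ)..1, ∫ t in (0 : ℝ)..1, ∫ x in (0 : ℝ)..1, F (x, t, μ)

lemma cubeIntegral_nonneg {F : ℝ × ℝ × ℝ → ℝ} (hF : ∀ w, 0 ≤ F w) : 0 ≤ cubeIntegral F :=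
  intervalIntegral.integral_nonneg zero_le_one fun _ _ =>
    intervalIntegral.integral_nonneg zero_le_one fun _ _ =>
      intervalIntegral.integral_nonneg zero_le_one fun _ _ => hF _

lemma intervalIntegral_zero_one_le {f : ℝ → ℝ} {C : ℝ} (hC : 0 ≤ C) (hf : ∀ x, f x ≤ C) :
    ∫ x in (0 : ℝ)..1, f x ≤ C := by
  by_cases hi : IntervalIntegrable f volume 0 1
  · simpa using intervalIntegral.integral_mono_on zero_le_one hi intervalIntegrable_const
      fun x _ => hf x
  · rw [intervalIntegral.integral_undef hi]
    exact hC

lemma cubeIntegral_le {F : ℝ × ℝ × ℝ → ℝ} {C : ℝ} (hC : 0 ≤ C) (hF : ∀ w, F w ≤ C) :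
    cubeIntegral F ≤ C :=
  intervalIntegral_zero_one_le hC fun _ => intervalIntegral_zero_one_le hC fun _ =>
    intervalIntegral_zero_one_le hC fun _ => hF _

lemma measurable_intervalIntegral_fst {β : Type*} [MeasurableSpace β] {H : ℝ × β → ℝ}
    (hH : Measurable H) : Measurable fun y => ∫ x in (0 : ℝ)..1, H (x, y) := by
  simp_rw [intervalIntegral.integral_of_le zero_le_one]
  exact (hH.stronglyMeasurable.integral_prod_left' (μ := volume.restrict (Ioc 0 1))).measurable

lemma norm_intervalIntegral_zero_one_le {f : ℝ → ℝ} {C : ℝ} (hf : ∀ x, ‖f x‖ ≤ C) :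
    ‖∫ x in (0 : ℝ)..1, f x‖ ≤ C := by
  simpa using intervalIntegral.norm_integral_le_of_norm_le_const (a := 0) (b := 1) fun x _ => hf x

lemma intervalIntegral_zero_one_mono {f g : ℝ → ℝ} {C : ℝ} (hf : Measurable f) (hg : Measurable g)
    (hfC : ∀ x, ‖f x‖ ≤ C) (hgC : ∀ x, ‖g x‖ ≤ C) (h : ∀ x, g x ≤ f x) :
    ∫ x in (0 : ℝ)..1, g x ≤ ∫ x in (0 : ℝ)..1, f x :=
  intervalIntegral.integral_mono_on zero_le_one
    (intervalIntegrable_const.mono_fun' hg.aestronglyMeasurable (ae_of_all _ hgC))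
    (intervalIntegrable_const.mono_fun' hf.aestronglyMeasurable (ae_of_all _ hfC)) fun x _ => h x

lemma cubeIntegral_mono {F G : ℝ × ℝ × ℝ → ℝ} {C : ℝ} (hF : Measurable F) (hG : Measurable G)
    (hFC : ∀ w, ‖F w‖ ≤ C) (hGC : ∀ w, ‖G w‖ ≤ C) (h : ∀ w, G w ≤ F w) :
    cubeIntegral G ≤ cubeIntegral F := by
  have hF₁ := measurable_intervalIntegral_fst hF
  have hG₁ := measurable_intervalIntegral_fst hG
  have hFC₁ := fun y => norm_intervalIntegral_zero_one_le fun x => hFC (x, y)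
  have hGC₁ := fun y => norm_intervalIntegral_zero_one_le fun x => hGC (x, y)
  refine intervalIntegral_zero_one_mono (measurable_intervalIntegral_fst hF₁)
    (measurable_intervalIntegral_fst hG₁) (fun μ => norm_intervalIntegral_zero_one_le
      fun t => hFC₁ (t, μ)) (fun μ => norm_intervalIntegral_zero_one_le fun t => hGC₁ (t, μ))
    fun μ => intervalIntegral_zero_one_mono (hF₁.comp (measurable_id.prodMk measurable_const))
      (hG₁.comp (measurable_id.prodMk measurable_const)) (fun t => hFC₁ (t, μ))
      (fun t => hGC₁ (t, μ)) fun t => intervalIntegral_zero_one_mono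
        (hF.comp (measurable_id.prodMk measurable_const))
        (hG.comp (measurable_id.prodMk measurable_const)) (fun x => hFC _) (fun x => hGC _)
        fun x => h _

lemma cubeIntegral_indicator (f : ℝ → ℝ) :
    cubeIntegral ({w : ℝ × ℝ × ℝ | 1 / 2 < w.2.2}.indicator fun w => f w.2.1) =
      (∫ t in (0 : ℝ)..1, f t) / 2 := by
  have h : ∀ μ, ∫ t in (0 : ℝ)..1, ∫ x in (0 : ℝ)..1,
      {w : ℝ × ℝ × ℝ | 1 / 2 < w.2.2}.indicator (fun w => f w.2.1) (x, t, μ) =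
      (Ioi (1 / 2)).indicator (fun _ => ∫ t in (0 : ℝ)..1, f t) μ := fun μ => by
    by_cases hμ : (2 : ℝ)⁻¹ < μ <;> simp [indicator, hμ]
  rw [cubeIntegral]
  simp_rw [h]
  rw [intervalIntegral.integral_of_le zero_le_one, integral_indicator measurableSet_Ioi,
    Measure.restrict_restrict measurableSet_Ioi, setIntegral_const]
  rw [inter_comm, Ioc_inter_Ioi, show (0 : ℝ) ⊔ (1 / 2) = 1 / 2 by norm_num,
    Real.volume_real_Ioc_of_le (by norm_num), smul_eq_mul]
  ring

section Path

variable {γ : ℝ → ℂ} {a b : ℝ}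

lemma lenOn_eq_cubeIntegral_certLfn (hγ : ContinuousOn γ (Icc a b)) :
    lenOn γ a b = cubeIntegral (certLfn γ a b) := by
  change len ((Icc a b).domRestrict γ) = _
  refine intervalIntegral.integral_congr_ae (ae_of_all _ fun μ hμ => ?_)
  rw [uIoc_of_le zero_le_one] at hμ
  simp_rw [Lfn_eq_certLfn hγ hμ.1]

lemma dist_le_two_pi_mul_lenOn (hγ : ContinuousOn γ (Icc a b))
    (hd : Metric.diam (γ '' Icc a b) ≤ 1 / 2) {z w : ℂ} (hz : z ∈ γ '' Icc a b)
    (hw : w ∈ γ '' Icc a b) : dist z w ≤ 2 * π * lenOn γ a b := by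
  set d := Metric.diam (γ '' Icc a b)
  have hzw : dist z w ≤ d :=
    Metric.dist_le_diam_of_mem (isCompact_Icc.image_of_continuousOn hγ).isBounded hz hw
  set f := fun t => dist (projPerp t z) (projPerp t w) / 2
  set G := {v : ℝ × ℝ × ℝ | 1 / 2 < v.2.2}.indicator fun v => f v.2.1
  have hG : Measurable G := (((continuous_projPerp_apply z).dist
    (continuous_projPerp_apply w)).div_const 2).measurable.comp (measurable_fst.comp measurable_snd)
    |>.indicator (measurableSet_lt measurable_const (measurable_snd.comp measurable_snd))
  have hGC : ∀ v, ‖G v‖ ≤ 2 * d := fun v => by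
    rw [Real.norm_of_nonneg (indicator_nonneg (fun _ _ => by positivity) _)]
    refine indicator_apply_le' (fun _ => ?_) fun _ => by positivity
    show dist (projPerp v.2.1 z) (projPerp v.2.1 w) / 2 ≤ 2 * d
    linarith [dist_projPerp_le v.2.1 z w, dist_nonneg (x := z) (y := w)]
  have hGL : ∀ v, G v ≤ certLfn γ a b v := fun v =>
    indicator_apply_le' (fun (hv : 1 / 2 < v.2.2) => by
      rw [← Lfn_eq_certLfn hγ (by linarith)]
      show dist (projPerp v.2.1 z) (projPerp v.2.1 w) / 2 ≤ _
      linarith [dist_projPerp_le_two_mul_Lfn hγ (x := v.1) (t := v.2.1) (by linarith)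
        (hd.trans hv.le) hz hw])
      fun _ => certLfn_nonneg _
  calc dist z w = 2 * π * ((∫ t in (0 : ℝ)..1, f t) / 2) := by
        rw [intervalIntegral.integral_div, integral_dist_projPerp]
        field_simp
    _ = 2 * π * cubeIntegral G := by rw [cubeIntegral_indicator]
    _ ≤ 2 * π * cubeIntegral (certLfn γ a b) := by
        gcongr
        exact cubeIntegral_mono measurable_certLfn hG (fun v => by
          rw [Real.norm_of_nonneg (certLfn_nonneg v)]; exact certLfn_le hγ v) hGC hGL
    _ = 2 * π * lenOn γ a b := by rw [lenOn_eq_cubeIntegral_certLfn hγ]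

end Path

theorem len_estimate_by_diam_general (a b : ℝ) (γ : ℝ → ℂ)
    (hγ : ContinuousOn γ (Icc a b))
    (hd : Metric.diam (γ '' Icc a b) ≤ 1 / 2) :
    (1 / (2 * Real.pi)) * Metric.diam (γ '' Icc a b) ≤ lenOn γ a b ∧
    lenOn γ a b ≤ 2 * Metric.diam (γ '' Icc a b) := by
  have hlen := lenOn_eq_cubeIntegral_certLfn hγ
  refine ⟨?_, hlen ▸ cubeIntegral_le (by positivity) (certLfn_le hγ)⟩
  rw [one_div, inv_mul_le_iff₀ (by positivity)]
  exact Metric.diam_le_of_forall_dist_le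
    (mul_nonneg (by positivity) (hlen ▸ cubeIntegral_nonneg certLfn_nonneg)) fun z hz w hw =>
      dist_le_two_pi_mul_lenOn hγ hd hz hw

/-- **Estimate (**).** If `γ : [a,b] → ℂ` is a path with `diam(γ([a,b])) ≤ 1/2`, then
`(1/(2π))·diam(γ([a,b])) ≤ len(γ) ≤ 2·diam(γ([a,b]))`. -/
theorem len_estimate_by_diam (a b : ℝ) (hab : a ≤ b) (γ : ℝ → ℂ)
    (hγ : ContinuousOn γ (Icc a b))
    (hd : Metric.diam (γ '' Icc a b) ≤ 1 / 2) :
    (1 / (2 * Real.pi)) * Metric.diam (γ '' Icc a b) ≤ lenOn γ a b ∧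
    lenOn γ a b ≤ 2 * Metric.diam (γ '' Icc a b) :=
  len_estimate_by_diam_general a b γ hγ hd
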